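/- Let (u, v, w) be a smooth solution of (KB) on ℝ² and let ε ∈ ℝ. Define ũ(x,t) = u(x + (5/6)εt, t) + ε, ṽ(x,t) = v(x + (5/6)εt, t) − (2/3)ε·u(x + (5/6)εt, t) − ε²/3, and w̃(x,t) = w(x + (5/6)εt, t) − (ε/3)·v(x + (5/6)εt, t) + (ε²/9)·u(x + (5/6)εt, t) + ε³/27. Then (ũ, ṽ, w̃) is also a smooth solution of (KB) on ℝ². -/

import Mathlib

/-- Partial derivative with respect to the first (space) variable. -/
noncomputable def pdx (f : ℝ → ℝ → ℝ) (x t : ℝ) : ℝ := deriv (fun y => f y t) x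

/-- Partial derivative with respect to the second (time) variable. -/
noncomputable def pdt (f : ℝ → ℝ → ℝ) (x t : ℝ) : ℝ := deriv (fun s => f x s) t

/-- The three-field Kaup–Boussinesq system (KB) holds for `(u,v,w)` at the point `(x,t)`:
`∂ₜu = (3/2)u∂ₓu + ∂ₓv`, `∂ₜv = v∂ₓu + (1/2)u∂ₓv + ∂ₓw`,
`∂ₜw = −(1/4)∂ₓ³u + w∂ₓu + (1/2)u∂ₓw`. -/
def KBAt (u v w : ℝ → ℝ → ℝ) (x t : ℝ) : Prop :=
  pdt u x t = 3/2 * u x t * pdx u x t + pdx v x t ∧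
  pdt v x t = v x t * pdx u x t + 1/2 * u x t * pdx v x t + pdx w x t ∧
  pdt w x t = -(1/4) * pdx (pdx (pdx u)) x t + w x t * pdx u x t
    + 1/2 * u x t * pdx w x t

/-- `f : ℝ × ℝ → ℝ` (curried) is smooth in both variables jointly. -/
def Smooth2 (f : ℝ → ℝ → ℝ) : Prop := ContDiff ℝ (⊤ : ℕ∞) (fun p : ℝ × ℝ => f p.1 p.2)

section aux

variable {f : ℝ → ℝ → ℝ} {c : ℝ}

lemma aux_smooth_shift (hf : Smooth2 f) : Smooth2 (fun x t => f (x + c * t) t) := by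
  have hL : ContDiff ℝ (⊤ : ℕ∞) (fun p : ℝ × ℝ => ((p.1 + c * p.2, p.2) : ℝ × ℝ)) :=
    ContDiff.prodMk (contDiff_fst.add (contDiff_const.mul contDiff_snd)) contDiff_snd
  exact hf.comp hL

lemma aux_pdx_eq_fderiv (hf : Smooth2 f) (x t : ℝ) :
    pdx f x t = fderiv ℝ (fun p : ℝ × ℝ => f p.1 p.2) (x, t) (1, 0) := by
  have hF := ((hf.differentiable (by simp)) (x, t)).hasFDerivAt
  have h1 : HasDerivAt (fun y : ℝ => ((y, t) : ℝ × ℝ)) ((1 : ℝ), (0 : ℝ)) x :=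
    HasDerivAt.prodMk (hasDerivAt_id x) (hasDerivAt_const x t)
  exact (hF.comp_hasDerivAt x h1).deriv

lemma aux_pdt_eq_fderiv (hf : Smooth2 f) (x t : ℝ) :
    pdt f x t = fderiv ℝ (fun p : ℝ × ℝ => f p.1 p.2) (x, t) (0, 1) := by
  have hF := ((hf.differentiable (by simp)) (x, t)).hasFDerivAt
  have h1 : HasDerivAt (fun s : ℝ => ((x, s) : ℝ × ℝ)) ((0 : ℝ), (1 : ℝ)) t :=
    HasDerivAt.prodMk (hasDerivAt_const t x) (hasDerivAt_id t)
  exact (hF.comp_hasDerivAt t h1).deriv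

lemma aux_smooth_pdx (hf : Smooth2 f) : Smooth2 (pdx f) := by
  have h : ContDiff ℝ (⊤ : ℕ∞) (fun p : ℝ × ℝ =>
      fderiv ℝ (fun p : ℝ × ℝ => f p.1 p.2) p ((1 : ℝ), (0 : ℝ))) :=
    (hf.fderiv_right (by simp)).clm_apply contDiff_const
  have heq : (fun p : ℝ × ℝ => pdx f p.1 p.2) = fun p : ℝ × ℝ =>
      fderiv ℝ (fun p : ℝ × ℝ => f p.1 p.2) p ((1 : ℝ), (0 : ℝ)) :=
    funext fun p => aux_pdx_eq_fderiv hf p.1 p.2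
  unfold Smooth2
  rw [heq]; exact h

lemma aux_hasDerivAt_x (hf : Smooth2 f) (x t : ℝ) :
    HasDerivAt (fun y => f (y + c * t) t) (pdx f (x + c * t) t) x := by
  have hd : DifferentiableAt ℝ (fun y => f y t) (x + c * t) := by
    have hF := ((hf.differentiable (by simp)) (x + c * t, t)).hasFDerivAt
    have h1 : HasDerivAt (fun y : ℝ => ((y, t) : ℝ × ℝ)) ((1 : ℝ), (0 : ℝ)) (x + c * t) :=
      HasDerivAt.prodMk (hasDerivAt_id _) (hasDerivAt_const _ t)
    exact (HasFDerivAt.comp_hasDerivAt (f := fun y : ℝ => ((y, t) : ℝ × ℝ))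
      (x + c * t) hF h1).differentiableAt
  have h := hd.hasDerivAt
  have h2 : HasDerivAt (fun y : ℝ => y + c * t) 1 x := (hasDerivAt_id x).add_const _
  have := HasDerivAt.comp x (h) h2
  simpa [pdx, Function.comp_def] using this

lemma aux_hasDerivAt_t (hf : Smooth2 f) (x t : ℝ) :
    HasDerivAt (fun s => f (x + c * s) s)
      (c * pdx f (x + c * t) t + pdt f (x + c * t) t) t := by
  have hF := ((hf.differentiable (by simp)) (x + c * t, t)).hasFDerivAt
  have h1 : HasDerivAt (fun s : ℝ => ((x + c * s, s) : ℝ × ℝ)) ((c : ℝ), (1 : ℝ)) t := by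
    simpa using HasDerivAt.prodMk (((hasDerivAt_id t).const_mul c).const_add x) (hasDerivAt_id t)
  have h2 := HasFDerivAt.comp_hasDerivAt (f := fun s : ℝ => ((x + c * s, s) : ℝ × ℝ)) t hF h1
  have h3 : fderiv ℝ (fun p : ℝ × ℝ => f p.1 p.2) (x + c * t, t) ((c : ℝ), (1 : ℝ))
      = c * pdx f (x + c * t) t + pdt f (x + c * t) t := by
    have hsum : ((c : ℝ), (1 : ℝ)) = c • ((1 : ℝ), (0 : ℝ)) + ((0 : ℝ), (1 : ℝ)) := by
      simp [Prod.ext_iff]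
    rw [hsum, map_add, map_smul, aux_pdx_eq_fderiv hf, aux_pdt_eq_fderiv hf]
    simp [smul_eq_mul]
  rw [h3] at h2
  exact h2

lemma aux_pdx_shift (hf : Smooth2 f) (x t : ℝ) :
    pdx (fun x t => f (x + c * t) t) x t = pdx f (x + c * t) t :=
  (aux_hasDerivAt_x hf x t).deriv

end aux

/-- The Galilean boost generated by `V3` maps smooth solutions of the
three-field Kaup–Boussinesq system to smooth solutions: if `(u,v,w)` solves (KB)
then so does `(ũ,ṽ,w̃)` with
`ũ(x,t) = u(x + (5/6)εt, t) + ε`,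
`ṽ(x,t) = v(x + (5/6)εt, t) − (2/3)ε·u(x + (5/6)εt, t) − ε²/3`,
`w̃(x,t) = w(x + (5/6)εt, t) − (ε/3)·v(x + (5/6)εt, t) + (ε²/9)·u(x + (5/6)εt, t) + ε³/27`. -/
theorem stmt_13 (u v w : ℝ → ℝ → ℝ) (ε : ℝ)
    (hu : Smooth2 u) (hv : Smooth2 v) (hw : Smooth2 w)
    (hKB : ∀ x t : ℝ, KBAt u v w x t) :
    Smooth2 (fun x t => u (x + 5/6 * ε * t) t + ε) ∧
    Smooth2 (fun x t => v (x + 5/6 * ε * t) t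
      - 2/3 * ε * u (x + 5/6 * ε * t) t - ε^2 / 3) ∧
    Smooth2 (fun x t => w (x + 5/6 * ε * t) t
      - ε/3 * v (x + 5/6 * ε * t) t + ε^2 / 9 * u (x + 5/6 * ε * t) t + ε^3 / 27) ∧
    ∀ x t : ℝ,
      KBAt (fun x t => u (x + 5/6 * ε * t) t + ε)
        (fun x t => v (x + 5/6 * ε * t) t
          - 2/3 * ε * u (x + 5/6 * ε * t) t - ε^2 / 3)
        (fun x t => w (x + 5/6 * ε * t) t
          - ε/3 * v (x + 5/6 * ε * t) t + ε^2 / 9 * u (x + 5/6 * ε * t) t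
          + ε^3 / 27) x t := by
  set c : ℝ := 5/6 * ε with hc
  -- smoothness parts
  have hUs : Smooth2 (fun x t => u (x + c * t) t) := aux_smooth_shift hu
  have hVs : Smooth2 (fun x t => v (x + c * t) t) := aux_smooth_shift hv
  have hWs : Smooth2 (fun x t => w (x + c * t) t) := aux_smooth_shift hw
  refine ⟨hUs.add contDiff_const, ?_, ?_, ?_⟩
  · exact (hVs.sub (contDiff_const.mul hUs)).sub contDiff_const
  · exact ((hWs.sub (contDiff_const.mul hVs)).add (contDiff_const.mul hUs)).add contDiff_const
  · intro x t
    obtain ⟨k1, k2, k3⟩ := hKB (x + c * t) t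
    -- pointwise derivative facts
    have hux := aux_hasDerivAt_x hu (c := c) x t
    have hvx := aux_hasDerivAt_x hv (c := c) x t
    have hwx := aux_hasDerivAt_x hw (c := c) x t
    have hut := aux_hasDerivAt_t hu (c := c) x t
    have hvt := aux_hasDerivAt_t hv (c := c) x t
    have hwt := aux_hasDerivAt_t hw (c := c) x t
    have EUx : pdx (fun x t => u (x + c * t) t + ε) x t = pdx u (x + c * t) t :=
      (hux.add_const ε).deriv
    have EUt : pdt (fun x t => u (x + c * t) t + ε) x t
        = c * pdx u (x + c * t) t + pdt u (x + c * t) t :=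
      (hut.add_const ε).deriv
    have EVx : pdx (fun x t => v (x + c * t) t - 2/3 * ε * u (x + c * t) t - ε^2 / 3) x t
        = pdx v (x + c * t) t - 2/3 * ε * pdx u (x + c * t) t :=
      ((hvx.sub (hux.const_mul (2/3 * ε))).sub_const _).deriv
    have EVt : pdt (fun x t => v (x + c * t) t - 2/3 * ε * u (x + c * t) t - ε^2 / 3) x t
        = (c * pdx v (x + c * t) t + pdt v (x + c * t) t)
          - 2/3 * ε * (c * pdx u (x + c * t) t + pdt u (x + c * t) t) :=
      ((hvt.sub (hut.const_mul (2/3 * ε))).sub_const _).deriv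
    have EWx : pdx (fun x t => w (x + c * t) t - ε/3 * v (x + c * t) t
          + ε^2 / 9 * u (x + c * t) t + ε^3 / 27) x t
        = pdx w (x + c * t) t - ε/3 * pdx v (x + c * t) t
          + ε^2 / 9 * pdx u (x + c * t) t :=
      (((hwx.sub (hvx.const_mul (ε/3))).add (hux.const_mul (ε^2 / 9))).add_const _).deriv
    have EWt : pdt (fun x t => w (x + c * t) t - ε/3 * v (x + c * t) t
          + ε^2 / 9 * u (x + c * t) t + ε^3 / 27) x t
        = ((c * pdx w (x + c * t) t + pdt w (x + c * t) t)
          - ε/3 * (c * pdx v (x + c * t) t + pdt v (x + c * t) t))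
          + ε^2 / 9 * (c * pdx u (x + c * t) t + pdt u (x + c * t) t) :=
      (((hwt.sub (hvt.const_mul (ε/3))).add (hut.const_mul (ε^2 / 9))).add_const _).deriv
    -- third space derivative of ũ
    have P1 : pdx (fun x t => u (x + c * t) t + ε) = fun x t => pdx u (x + c * t) t :=
      funext fun a => funext fun b => ((aux_hasDerivAt_x hu (c := c) a b).add_const ε).deriv
    have P2 : pdx (fun x t => pdx u (x + c * t) t) = fun x t => pdx (pdx u) (x + c * t) t :=
      funext fun a => funext fun b => aux_pdx_shift (aux_smooth_pdx hu) a b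
    have P3 : pdx (fun x t => pdx (pdx u) (x + c * t) t)
        = fun x t => pdx (pdx (pdx u)) (x + c * t) t :=
      funext fun a => funext fun b => aux_pdx_shift (aux_smooth_pdx (aux_smooth_pdx hu)) a b
    have P : pdx (pdx (pdx (fun x t => u (x + c * t) t + ε))) x t
        = pdx (pdx (pdx u)) (x + c * t) t := by
      rw [P1, P2, P3]
    refine ⟨?_, ?_, ?_⟩
    · show pdt (fun x t => u (x + c * t) t + ε) x t = _
      rw [EUt, EUx, EVx, k1]
      have hε : c = 5/6 * ε := hc
      rw [hε]; ring
    · show pdt (fun x t => v (x + c * t) t - 2/3 * ε * u (x + c * t) t - ε^2/3) x t = _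
      rw [EVt, EUx, EVx, EWx, k1, k2]
      have hε : c = 5/6 * ε := hc
      rw [hε]; ring
    · show pdt (fun x t => w (x + c * t) t - ε/3 * v (x + c * t) t
          + ε^2 / 9 * u (x + c * t) t + ε^3/27) x t = _
      rw [EWt, EUx, EWx, P, k1, k2, k3]
      have hε : c = 5/6 * ε := hc
      rw [hε]; ring
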